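/- arXiv:0705.1033 — 5 statements merged into one kernel-verified Lean document; each statement's English description precedes it below -/
import Mathlib

section
/- Let N ≥ 1 and let c : ZMod N → Bool be a two-coloring of N positions arranged in a cycle (positions with c i = true are called blue). Let B be the total number of blue positions, and let w ≤ N be a window length. Then there exists a starting position i such that the number k of blue positions in the cyclic window {i, i+1, ..., i+w−1} of length w satisfies |k·N − w·B| < N (equivalently, k is within strictly less than 1 of the average value w·B/N). -/
/-!
Shifting a window one step forward changes its blue count by at most one, and every position
lies in exactly `w` of the `N` windows, so the counts sum to `w * B`. Some window therefore has
count at most the average `w * B / N` and some window at least it; walking around the cycle from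
the first to the second, the count hits `⌊w * B / N⌋` on the way, and that window is within one
of the average.
-/

open Finset

theorem Nat.exists_eq_of_succ_le_add_one {g : ℕ → ℕ} (hg : ∀ n, g (n + 1) ≤ g n + 1)
    {m : ℕ} (h₀ : g 0 ≤ m) : ∀ {K : ℕ}, m ≤ g K → ∃ n ≤ K, g n = m
  | 0, hK => ⟨0, le_rfl, le_antisymm h₀ hK⟩
  | K + 1, hK => by
    by_cases h : m ≤ g K
    · obtain ⟨n, hn, hgn⟩ := Nat.exists_eq_of_succ_le_add_one hg h₀ h
      exact ⟨n, hn.trans K.le_succ, hgn⟩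
    · exact ⟨K + 1, le_rfl, by have := hg K; omega⟩

theorem ZMod.exists_eq_of_add_one_le_add_one {N : ℕ} [NeZero N] {f : ZMod N → ℕ}
    (hf : ∀ i, f (i + 1) ≤ f i + 1) {m : ℕ} {a b : ZMod N} (ha : f a ≤ m) (hb : m ≤ f b) :
    ∃ i, f i = m := by
  have hstep (n : ℕ) : f (a + (n + 1 : ℕ)) ≤ f (a + n) + 1 := by
    simpa [add_assoc] using hf (a + n)
  have hb' : m ≤ f (a + (b - a).val) := by simpa using hb
  obtain ⟨n, -, hn⟩ := Nat.exists_eq_of_succ_le_add_one (g := fun n : ℕ => f (a + n)) hstep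
    (by simpa using ha) hb'
  exact ⟨_, hn⟩

theorem Fintype.exists_mul_card_le_sum {ι : Type*} [Fintype ι] [Nonempty ι] (f : ι → ℕ) :
    ∃ a, f a * Fintype.card ι ≤ ∑ i, f i := by
  obtain ⟨a, -, ha⟩ := exists_le_of_sum_le univ_nonempty
    (f := fun i => f i * Fintype.card ι) (g := fun _ => ∑ i, f i)
    (by simp [← sum_mul, mul_comm])
  exact ⟨a, ha⟩

theorem Fintype.exists_sum_le_mul_card {ι : Type*} [Fintype ι] [Nonempty ι] (f : ι → ℕ) :
    ∃ b, ∑ i, f i ≤ f b * Fintype.card ι := by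
  obtain ⟨b, -, hb⟩ := exists_le_of_sum_le univ_nonempty
    (f := fun _ => ∑ i, f i) (g := fun i => f i * Fintype.card ι)
    (by simp [← sum_mul, mul_comm])
  exact ⟨b, hb⟩

section WindowCount

variable {G : Type*} [AddGroupWithOne G]

def windowCount (c : G → Bool) (w : ℕ) (i : G) : ℕ :=
  #((range w).filter fun j : ℕ => c (i + j) = true)

theorem windowCount_add_one_le (c : G → Bool) (w : ℕ) (i : G) :
    windowCount c w (i + 1) ≤ windowCount c w i + 1 := by
  have hshift :
      windowCount c w (i + 1) ≤ #((range (w + 1)).filter fun j : ℕ => c (i + j) = true) := by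
    refine card_le_card_of_injOn (· + 1) (fun j hj => ?_) fun _ _ _ _ => Nat.succ.inj
    simp only [coe_filter, mem_range, Set.mem_ofPred_eq] at hj ⊢
    obtain ⟨hjw, hcj⟩ := hj
    refine ⟨by omega, ?_⟩
    rwa [Nat.cast_succ, Nat.cast_add_one_comm, ← add_assoc]
  refine hshift.trans ?_
  rw [range_add_one, filter_insert]
  split_ifs
  · exact card_insert_le _ _
  · exact Nat.le_succ _

theorem sum_windowCount [Fintype G] (c : G → Bool) (w : ℕ) :
    ∑ i, windowCount c w i = w * #{j | c j = true} := by
  calc ∑ i, windowCount c w i = ∑ _j ∈ range w, #{i | c i = true} := by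
        simp only [windowCount, card_filter]
        rw [sum_comm]
        exact sum_congr rfl fun j _ => Fintype.sum_equiv (Equiv.addRight (j : G)) _ _ fun _ => rfl
    _ = w * #{j | c j = true} := by rw [sum_const, card_range, smul_eq_mul]

end WindowCount

theorem Nat.abs_div_mul_sub_lt (a : ℕ) {N : ℕ} (hN : 0 < N) :
    |((a / N : ℕ) : ℤ) * N - a| < N := by
  have hdiv := Nat.div_add_mod a N
  have hmod := Nat.mod_lt a hN
  generalize a / N = q at hdiv ⊢
  generalize a % N = r at hdiv hmod
  subst hdiv
  push_cast
  rw [abs_lt]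
  constructor <;> linarith

theorem necklace_window_near_average_general (N : ℕ) [NeZero N]
    (c : ZMod N → Bool)
    (B : ℕ) (hB : B = (Finset.univ.filter (fun j : ZMod N => c j = true)).card)
    (w : ℕ) :
    ∃ i : ZMod N,
      |((((Finset.range w).filter
            (fun j : ℕ => c (i + (j : ZMod N)) = true)).card : ℤ) * (N : ℤ)
          - (w : ℤ) * (B : ℤ))| < (N : ℤ) := by
  have hN : 0 < N := Nat.pos_of_neZero N
  have hsum : ∑ i, windowCount c w i = w * B := hB ▸ sum_windowCount c w
  obtain ⟨a, ha⟩ := Fintype.exists_mul_card_le_sum (windowCount c w)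
  obtain ⟨b, hb⟩ := Fintype.exists_sum_le_mul_card (windowCount c w)
  rw [hsum, ZMod.card] at ha hb
  obtain ⟨i, hi⟩ := ZMod.exists_eq_of_add_one_le_add_one (windowCount_add_one_le c w)
    ((Nat.le_div_iff_mul_le hN).2 ha) (Nat.div_le_of_le_mul (mul_comm N _ ▸ hb))
  refine ⟨i, ?_⟩
  change |(windowCount c w i : ℤ) * N - w * B| < N
  rw [hi]
  exact_mod_cast Nat.abs_div_mul_sub_lt (w * B) hN

/-- Discrete continuity on a necklace: some cyclic window of length `w`
has blue count within strictly less than 1 of the average `w·B/N`. -/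
theorem necklace_window_near_average (N : ℕ) [NeZero N] (hN : 1 ≤ N)
    (c : ZMod N → Bool)
    (B : ℕ) (hB : B = (Finset.univ.filter (fun j : ZMod N => c j = true)).card)
    (w : ℕ) (hw : w ≤ N) :
    ∃ i : ZMod N,
      |((((Finset.range w).filter
            (fun j : ℕ => c (i + (j : ZMod N)) = true)).card : ℤ) * (N : ℤ)
          - (w : ℤ) * (B : ℤ))| < (N : ℤ) :=
  necklace_window_near_average_general N c B hB w
end

section
/- Let c : Fin N → Bool be a two-coloring of an array of N elements, where elements with c i = true are called blue and the others red. Let B be the number of blue elements and R = N − B the number of red elements. Then there exist indices a ≤ b ≤ N such that the contiguous subarray with index set {i : a ≤ i < b} contains k blue elements and r red elements with |2k − B| ≤ 2 and |2r − R| ≤ 2 (i.e., the subarray contains half of the blue elements to within one and half of the red elements to within one). -/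
/-!
Slide a window of length `⌈N/2⌉` from the left end of the array to the right end. Its blue count
changes by at most one per step, and the first and last windows together cover every blue
element once, except possibly the middle one twice; so their blue counts lie on either side of
`⌈B/2⌉`, and some window has exactly `⌈B/2⌉` blue elements. The rest of that window, about half
of the array, is red and hence about half of the red elements.
-/

open Finset

theorem Int.exists_eq_of_le_of_le_of_abs_sub_le_one {f : ℕ → ℤ}
    (hf : ∀ i, |f (i + 1) - f i| ≤ 1) {n : ℕ} {v : ℤ} (h0 : f 0 ≤ v) (hn : v ≤ f n) :
    ∃ i ≤ n, f i = v := by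
  induction n with
  | zero => exact ⟨0, le_rfl, le_antisymm h0 hn⟩
  | succ n ih =>
    by_cases hv : v ≤ f n
    · obtain ⟨i, hi, hfi⟩ := ih hv
      exact ⟨i, hi.trans n.le_succ, hfi⟩
    · have := abs_le.1 (hf n)
      exact ⟨n + 1, le_rfl, by omega⟩

theorem Int.exists_eq_of_abs_sub_le_one {f : ℕ → ℤ} (hf : ∀ i, |f (i + 1) - f i| ≤ 1)
    {n : ℕ} {v : ℤ} (hmin : min (f 0) (f n) ≤ v) (hmax : v ≤ max (f 0) (f n)) :
    ∃ i ≤ n, f i = v := by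
  rcases le_total (f 0) (f n) with h | h
  · exact exists_eq_of_le_of_le_of_abs_sub_le_one (n := n) hf (by omega) (by omega)
  · have hf' : ∀ i, |-f (i + 1) - -f i| ≤ 1 := fun i => by
      rw [neg_sub_neg, abs_sub_comm]
      exact hf i
    obtain ⟨i, hi, hfi⟩ :=
      exists_eq_of_le_of_le_of_abs_sub_le_one (f := (-f ·)) (n := n) (v := -v) hf'
        (by omega) (by omega)
    exact ⟨i, hi, by omega⟩

section CountIco

variable {N : ℕ} (P : Fin N → Prop) [DecidablePred P]

def countIco (a b : ℕ) : ℕ :=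
  #{i : Fin N | a ≤ (i : ℕ) ∧ (i : ℕ) < b ∧ P i}

theorem countIco_add_countIco {a b c : ℕ} (hab : a ≤ b) (hbc : b ≤ c) :
    countIco P a b + countIco P b c = countIco P a c := by
  unfold countIco
  rw [← card_union_of_disjoint (disjoint_filter.2 fun i _ h h' => by omega), ← filter_or]
  congr 1
  ext i
  simp only [mem_filter, mem_univ, true_and]
  by_cases hP : P i <;> simp only [hP, and_true, and_false, or_false]
  omega

theorem countIco_le_sub (a b : ℕ) : countIco P a b ≤ b - a := by
  rw [← Nat.card_Ico]
  refine card_le_card_of_injOn Fin.val (fun i hi => ?_) Fin.val_injective.injOn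
  simp only [coe_filter, mem_univ, true_and, Set.mem_ofPred_eq] at hi
  simp only [coe_Ico, Set.mem_Ico]
  omega

theorem countIco_zero_eq_card_of_le {b : ℕ} (hb : N ≤ b) : countIco P 0 b = #{i | P i} := by
  unfold countIco
  congr 1
  ext i
  simp only [mem_filter, mem_univ, true_and, zero_le]
  exact and_iff_right (by omega)

theorem countIco_add_countIco_not {a b : ℕ} (hb : b ≤ N) :
    countIco P a b + countIco (fun i => ¬P i) a b = b - a := by
  have hIco : ∀ j ∈ Ico a b, j < N := fun j hj => by simp only [mem_Ico] at hj; omega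
  rw [← Nat.card_Ico, ← card_attachFin _ hIco, ← card_filter_add_card_filter_not (p := P)]
  unfold countIco
  congr 2 <;> ext i <;>
    simp only [mem_filter, mem_univ, true_and, mem_attachFin, mem_Ico, and_assoc]

theorem abs_countIco_window_succ_sub_le_one (L a : ℕ) :
    |(countIco P (a + 1) (a + 1 + L) : ℤ) - countIco P a (a + L)| ≤ 1 := by
  have hleft := countIco_add_countIco P (by omega : a ≤ a + 1) (by omega : a + 1 ≤ a + 1 + L)
  have hright := countIco_add_countIco P (by omega : a ≤ a + L) (by omega : a + L ≤ a + L + 1)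
  have h₁ := countIco_le_sub P a (a + 1)
  have h₂ := countIco_le_sub P (a + L) (a + L + 1)
  rw [show a + 1 + L = a + L + 1 by omega] at hleft ⊢
  rw [abs_le]
  omega

theorem exists_countIco_window_eq :
    ∃ a ≤ N / 2, countIco P a (a + (N - N / 2)) = (#{i | P i} + 1) / 2 := by
  set m := N / 2
  set L := N - m
  have hfirst := countIco_add_countIco P (Nat.zero_le m) (show m ≤ L by omega)
  have hlast := countIco_add_countIco P (Nat.zero_le m) (show m ≤ m + L by omega)
  have hmiddle := countIco_le_sub P m L
  rw [countIco_zero_eq_card_of_le P (show N ≤ m + L by omega)] at hlast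
  obtain ⟨a, ha, hfa⟩ :=
    Int.exists_eq_of_abs_sub_le_one (f := fun a => (countIco P a (a + L) : ℤ))
      (abs_countIco_window_succ_sub_le_one P L) (n := m) (v := ((#{i | P i} + 1) / 2 : ℕ))
      (by simp only [zero_add]; omega) (by simp only [zero_add]; omega)
  exact ⟨a, ha, by exact_mod_cast hfa⟩

end CountIco

/-- Necklace-bisection lemma, array version: some contiguous subarray
contains half of the blue elements to within one and half of the red
elements to within one. -/
theorem necklace_bisection_array (N : ℕ) (c : Fin N → Bool)
    (B R : ℕ) (hB : B = (Finset.univ.filter (fun i : Fin N => c i = true)).card)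
    (hR : R = N - B) :
    ∃ a b : ℕ, a ≤ b ∧ b ≤ N ∧
      |2 * (((Finset.univ.filter
          (fun i : Fin N => a ≤ (i : ℕ) ∧ (i : ℕ) < b ∧ c i = true)).card : ℤ))
        - (B : ℤ)| ≤ 2 ∧
      |2 * (((Finset.univ.filter
          (fun i : Fin N => a ≤ (i : ℕ) ∧ (i : ℕ) < b ∧ c i = false)).card : ℤ))
        - (R : ℤ)| ≤ 2 := by
  obtain ⟨a, ha, hblue⟩ := exists_countIco_window_eq fun i => c i = true
  have hsplit := countIco_add_countIco_not (fun i => c i = true) (a := a)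
    (show a + (N - N / 2) ≤ N by omega)
  have htotal := countIco_add_countIco_not (fun i => c i = true) (a := 0) le_rfl
  rw [countIco_zero_eq_card_of_le _ le_rfl, ← hB] at htotal
  simp only [Bool.not_eq_true] at hsplit htotal
  refine ⟨a, a + (N - N / 2), Nat.le_add_right _ _, by omega, ?_, ?_⟩
  · change |2 * (countIco (fun i => c i = true) a (a + (N - N / 2)) : ℤ) - B| ≤ 2
    rw [abs_le]
    omega
  · change |2 * (countIco (fun i => c i = false) a (a + (N - N / 2)) : ℤ) - R| ≤ 2
    rw [abs_le]
    omega
end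

section
/- Let p be a real number with 0 < p < 1, let c > 0 be real, let N ≥ 2 be a natural number, and let S be a natural number with (S : ℝ) ≥ (8·c/p)·Real.log N. Then the sum over all natural numbers k ∈ {0, 1, ..., S} with (k : ℝ) > p·S/2 of (S choose k)·p^k·(1−p)^(S−k) is at least 1 − N^(−c). In words: when at least (8c/p)·ln N coins, each with heads probability p, are flipped, then with probability at least 1 − N^(−c) more than p·S/2 of the flips are heads. -/
/-!
Chernoff bound via the exponential moment `2 ^ k`: the lower tail `k ≤ pS/2` of the binomial
distribution is at most `2 ^ (pS/2) · (1 - p/2) ^ S ≤ exp (-(1 - log 2) pS/2) ≤ exp (-pS/8)`,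
and `pS/8 ≥ c log N` turns this into `N ^ (-c)`.
-/

open Finset Real

theorem sum_choose_mul_pow_mul_one_sub_pow (p : ℝ) (S : ℕ) :
    ∑ k ∈ range (S + 1), (S.choose k : ℝ) * p ^ k * (1 - p) ^ (S - k) = 1 := by
  have h := add_pow p (1 - p) S
  rw [add_sub_cancel, one_pow] at h
  exact (sum_congr rfl fun k _ => by ring).trans h.symm

theorem binomial_lower_tail_le_rpow_mul_pow {p q θ : ℝ} (hp : 0 ≤ p) (hq : 0 ≤ q) (hθ : 1 ≤ θ)
    (a : ℝ) (S : ℕ) :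
    ∑ k ∈ (range (S + 1)).filter (fun k : ℕ => (k : ℝ) ≤ a),
        (S.choose k : ℝ) * p ^ k * q ^ (S - k) ≤ θ ^ a * (p / θ + q) ^ S := by
  have hθ0 : 0 < θ := one_pos.trans_le hθ
  have hterm : ∀ k : ℕ, (k : ℝ) ≤ a →
      (S.choose k : ℝ) * p ^ k * q ^ (S - k) ≤
        θ ^ a * ((S.choose k : ℝ) * (p / θ) ^ k * q ^ (S - k)) := by
    intro k hk
    have hpow : (S.choose k : ℝ) * p ^ k * q ^ (S - k) =
        θ ^ (k : ℝ) * ((S.choose k : ℝ) * (p / θ) ^ k * q ^ (S - k)) := by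
      rw [rpow_natCast, div_pow]
      field_simp
    rw [hpow]
    gcongr
  calc ∑ k ∈ (range (S + 1)).filter (fun k : ℕ => (k : ℝ) ≤ a),
          (S.choose k : ℝ) * p ^ k * q ^ (S - k)
      ≤ ∑ k ∈ (range (S + 1)).filter (fun k : ℕ => (k : ℝ) ≤ a),
          θ ^ a * ((S.choose k : ℝ) * (p / θ) ^ k * q ^ (S - k)) :=
        sum_le_sum fun k hk => hterm k (mem_filter.1 hk).2
    _ ≤ ∑ k ∈ range (S + 1), θ ^ a * ((S.choose k : ℝ) * (p / θ) ^ k * q ^ (S - k)) :=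
        sum_le_sum_of_subset_of_nonneg (filter_subset _ _) fun k _ _ => by positivity
    _ = θ ^ a * (p / θ + q) ^ S := by
        rw [← mul_sum, add_pow]
        exact congrArg _ (sum_congr rfl fun k _ => by ring)

theorem binomial_lower_half_tail_le_exp {p : ℝ} (hp0 : 0 ≤ p) (hp1 : p ≤ 1) (S : ℕ) :
    ∑ k ∈ (range (S + 1)).filter (fun k : ℕ => (k : ℝ) ≤ p * S / 2),
        (S.choose k : ℝ) * p ^ k * (1 - p) ^ (S - k) ≤ exp (-(p * S / 8)) := by
  have hlog2 : log 2 < 3 / 4 := by linarith [log_two_lt_d9]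
  calc ∑ k ∈ (range (S + 1)).filter (fun k : ℕ => (k : ℝ) ≤ p * S / 2),
          (S.choose k : ℝ) * p ^ k * (1 - p) ^ (S - k)
      ≤ 2 ^ (p * S / 2) * (p / 2 + (1 - p)) ^ S :=
        binomial_lower_tail_le_rpow_mul_pow hp0 (by linarith) one_le_two _ S
    _ ≤ exp (log 2 * (p * S / 2)) * exp (-(p / 2)) ^ S := by
        rw [← rpow_def_of_pos two_pos]
        gcongr
        linarith [one_sub_le_exp_neg (p / 2)]
    _ = exp (-((1 - log 2) * (p * S / 2))) := by
        rw [← exp_nat_mul, ← exp_add]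
        ring_nf
    _ ≤ exp (-(p * S / 8)) := by
        gcongr
        nlinarith [mul_nonneg hp0 (Nat.cast_nonneg (α := ℝ) S)]

theorem coin_flipping_whp_general (p : ℝ) (hp0 : 0 < p) (hp1 : p < 1)
    (c : ℝ) (N : ℕ) (hN : 2 ≤ N)
    (S : ℕ) (hS : (S : ℝ) ≥ (8 * c / p) * Real.log N) :
    1 - (N : ℝ) ^ (-c : ℝ) ≤
      ∑ k ∈ (Finset.range (S + 1)).filter (fun k : ℕ => p * S / 2 < (k : ℝ)),
        (S.choose k : ℝ) * p ^ k * (1 - p) ^ (S - k) := by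
  have hN0 : (0 : ℝ) < N := by exact_mod_cast (two_pos.trans_le hN)
  have hcS : c * log N ≤ p * S / 8 := by
    rw [ge_iff_le, div_mul_eq_mul_div, div_le_iff₀ hp0] at hS
    linarith
  have hlower : ∑ k ∈ (range (S + 1)).filter (fun k : ℕ => ¬ p * S / 2 < (k : ℝ)),
      (S.choose k : ℝ) * p ^ k * (1 - p) ^ (S - k) ≤ (N : ℝ) ^ (-c) := by
    simp only [not_lt]
    calc _ ≤ exp (-(p * S / 8)) := binomial_lower_half_tail_le_exp hp0.le hp1.le S
      _ ≤ exp (log N * -c) := exp_le_exp.2 (by linarith)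
      _ = (N : ℝ) ^ (-c) := (rpow_def_of_pos hN0 _).symm
  have htotal := sum_filter_add_sum_filter_not (range (S + 1))
    (fun k : ℕ => p * S / 2 < (k : ℝ)) fun k => (S.choose k : ℝ) * p ^ k * (1 - p) ^ (S - k)
  rw [sum_choose_mul_pow_mul_one_sub_pow] at htotal
  linarith

/-- Coin-flipping lemma: with `S ≥ (8c/p)·ln N` flips of a coin with heads
probability `p`, with probability at least `1 − N^{-c}` more than `p·S/2`
of the flips are heads. -/
theorem coin_flipping_whp (p : ℝ) (hp0 : 0 < p) (hp1 : p < 1)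
    (c : ℝ) (hc : 0 < c) (N : ℕ) (hN : 2 ≤ N)
    (S : ℕ) (hS : (S : ℝ) ≥ (8 * c / p) * Real.log N) :
    1 - (N : ℝ) ^ (-c : ℝ) ≤
      ∑ k ∈ (Finset.range (S + 1)).filter (fun k : ℕ => p * S / 2 < (k : ℝ)),
        (S.choose k : ℝ) * p ^ k * (1 - p) ^ (S - k) :=
  coin_flipping_whp_general p hp0 hp1 c N hN S hS
end

section
/- Let N ≥ 1 and b be natural numbers, and let r : ZMod N → ℕ satisfy r i ≤ b for every i. Then there exists a cyclically contiguous subset I of ZMod N (i.e., I = {s, s+1, ..., s+m−1} with indices taken modulo N, for some s and some 0 ≤ m ≤ N) such that: (i) |card I − card Iᶜ| ≤ 2, and (ii) |∑_{i ∈ I} r i − ∑_{i ∉ I} r i| ≤ 2·b + 2. -/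
/-!
Slide a window of `m = ⌈N/2⌉` consecutive positions around the cycle and record its balance,
the weight inside minus the weight outside. Moving the window by one changes the balance by
`2 (r (s + m) - r s) ≤ 2 b`, and every position lies in exactly `m` windows, so the balances sum
to `(2 m - N) ∑ r ∈ [0, N b]`. Hence some balance is nonnegative; if another one is negative,
the first upward crossing of `0` lands in `[0, 2 b)`, and otherwise the average bounds the
smallest balance by `b`.
-/

open Finset

theorem Finset.sum_range_add_one_add_eq {R M : Type*} [AddCommMonoidWithOne R] [AddCommMonoid M]
    (f : R → M) (s : R) (m : ℕ) :
    ∑ j ∈ range m, f (s + 1 + j) + f s = ∑ j ∈ range m, f (s + j) + f (s + m) := by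
  rw [← sum_range_succ, sum_range_succ' (fun j : ℕ => f (s + j))]
  simp only [Nat.cast_add, Nat.cast_one, Nat.cast_zero, add_zero, ← add_assoc, add_right_comm s 1]

theorem Finset.sum_univ_sum_add {G M ι : Type*} [AddGroup G] [Fintype G] [AddCommMonoid M]
    (f : G → M) (t : Finset ι) (a : ι → G) :
    ∑ s, ∑ j ∈ t, f (s + a j) = #t • ∑ i, f i := by
  rw [sum_comm, ← sum_const]
  exact sum_congr rfl fun j _ => Equiv.sum_comp (Equiv.addRight (a j)) f

namespace ZMod

section CyclicInterval

variable {N m : ℕ}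

def cyclicInterval (s : ZMod N) (m : ℕ) : Finset (ZMod N) :=
  (range m).image fun j : ℕ => s + j

theorem injOn_add_natCast (s : ZMod N) (hm : m ≤ N) :
    Set.InjOn (fun j : ℕ => s + (j : ZMod N)) (range m) := fun _ hi _ hj hij =>
  CharP.natCast_injOn_Iio (ZMod N) N (lt_of_lt_of_le (mem_range.mp hi) hm)
    (lt_of_lt_of_le (mem_range.mp hj) hm) (add_left_cancel hij)

theorem card_cyclicInterval (s : ZMod N) (hm : m ≤ N) : #(cyclicInterval s m) = m := by
  rw [cyclicInterval, card_image_of_injOn (injOn_add_natCast s hm), card_range]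

theorem sum_cyclicInterval {M : Type*} [AddCommMonoid M] (f : ZMod N → M) (s : ZMod N)
    (hm : m ≤ N) : ∑ i ∈ cyclicInterval s m, f i = ∑ j ∈ range m, f (s + j) :=
  sum_image (injOn_add_natCast s hm)

end CyclicInterval

variable {N : ℕ} [NeZero N] {m : ℕ}

theorem sum_cyclicInterval_sub_sum_compl {M : Type*} [AddCommGroup M] (f : ZMod N → M)
    (s : ZMod N) (hm : m ≤ N) :
    ∑ i ∈ cyclicInterval s m, f i - ∑ i ∈ (cyclicInterval s m)ᶜ, f i =
      2 • ∑ j ∈ range m, f (s + j) - ∑ i, f i := by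
  rw [← sum_compl_add_sum (cyclicInterval s m), sum_cyclicInterval f s hm]
  abel

theorem exists_nonneg_lt_of_add_one_le {α : Type*} [AddCommGroup α] [LinearOrder α]
    [IsOrderedAddMonoid α] {f : ZMod N → α} {D : α} (hstep : ∀ s, f (s + 1) ≤ f s + D)
    {t u : ZMod N} (ht : f t < 0) (hu : 0 ≤ f u) : ∃ s, 0 ≤ f s ∧ f s < D := by
  obtain ⟨j, hj, hj1⟩ := Nat.exists_not_and_succ_of_not_zero_of_exists
    (p := fun j : ℕ => 0 ≤ f (t + j)) (by simpa using ht)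
    ⟨(u - t).val, by simpa [natCast_zmod_val] using hu⟩
  refine ⟨t + j + 1, by simpa [add_assoc] using hj1, ?_⟩
  calc f (t + j + 1) ≤ f (t + j) + D := hstep _
    _ < D := by simpa using (not_le.mp hj)

theorem exists_abs_le_of_add_one_le {f : ZMod N → ℤ} {D : ℤ} (hstep : ∀ s, f (s + 1) ≤ f s + D)
    (hsum_nonneg : 0 ≤ ∑ s, f s) (hsum_le : ∑ s, f s ≤ N * D) : ∃ s, |f s| ≤ D := by
  obtain ⟨u, -, hu⟩ := exists_le_of_sum_le univ_nonempty (f := fun _ => 0) (g := f)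
    (by simpa using hsum_nonneg)
  by_cases hneg : ∃ t, f t < 0
  · obtain ⟨t, ht⟩ := hneg
    obtain ⟨s, hs0, hsD⟩ := exists_nonneg_lt_of_add_one_le hstep ht hu
    exact ⟨s, abs_le.mpr ⟨by linarith, hsD.le⟩⟩
  · push Not at hneg
    obtain ⟨s, -, hs⟩ := exists_le_of_sum_le univ_nonempty (f := f) (g := fun _ => D)
      (by simpa [mul_comm] using hsum_le)
    exact ⟨s, abs_le.mpr ⟨by linarith [hneg s, abs_nonneg (f s)], hs⟩⟩

end ZMod

open ZMod in
theorem fully_balanced_cyclic_partition_general (N b : ℕ) [NeZero N]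
    (r : ZMod N → ℕ) (hr : ∀ i, r i ≤ b) :
    ∃ I : Finset (ZMod N),
      (∃ (s : ZMod N) (m : ℕ), m ≤ N ∧
        I = (Finset.range m).image (fun j : ℕ => s + (j : ZMod N))) ∧
      |(I.card : ℤ) - (Iᶜ.card : ℤ)| ≤ 2 ∧
      |(∑ i ∈ I, (r i : ℤ)) - ∑ i ∈ Iᶜ, (r i : ℤ)| ≤ 2 * (b : ℤ) + 2 := by
  set m := (N + 1) / 2
  have hmN : m ≤ N := by omega
  set T := ∑ i, (r i : ℤ)
  let balance (s : ZMod N) : ℤ := 2 * ∑ j ∈ range m, (r (s + j) : ℤ) - T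
  have hstep (s : ZMod N) : balance (s + 1) ≤ balance s + 2 * b := by
    have := sum_range_add_one_add_eq (fun i => (r i : ℤ)) s m
    have := hr (s + m)
    simp only [balance]
    omega
  have hsum : ∑ s, balance s = (2 * m - N) * T := by
    simp only [balance, sum_sub_distrib, ← mul_sum,
      sum_univ_sum_add (fun i => (r i : ℤ)) (range m) (fun j : ℕ => (j : ZMod N)), card_range,
      sum_const, card_univ, ZMod.card, nsmul_eq_mul]
    ring
  have hT_nonneg : 0 ≤ T := sum_nonneg fun i _ => Int.natCast_nonneg (r i)
  have hT_le : T ≤ N * b := by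
    simpa using sum_le_card_nsmul univ _ (b : ℤ) fun i _ => Int.ofNat_le.mpr (hr i)
  have hm : 0 ≤ (2 * m - N : ℤ) ∧ (2 * m - N : ℤ) ≤ 1 := by omega
  obtain ⟨s, hs⟩ := exists_abs_le_of_add_one_le hstep
    (by rw [hsum]; exact mul_nonneg hm.1 hT_nonneg) (by rw [hsum]; nlinarith)
  refine ⟨cyclicInterval s m, ⟨s, m, hmN, rfl⟩, ?_, ?_⟩
  · rw [card_compl, card_cyclicInterval s hmN, ZMod.card, Nat.cast_sub hmN, abs_le]
    omega
  · rw [sum_cyclicInterval_sub_sum_compl _ s hmN]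
    calc _ = |balance s| := by simp only [balance, T, two_nsmul, two_mul]
      _ ≤ _ := by omega

/-- Combinatorial core of the fully-balanced partition: some cyclically
contiguous subset of positions splits both the number of positions and
the total outgoing-edge count nearly evenly. -/
theorem fully_balanced_cyclic_partition (N b : ℕ) [NeZero N] (hN : 1 ≤ N)
    (r : ZMod N → ℕ) (hr : ∀ i, r i ≤ b) :
    ∃ I : Finset (ZMod N),
      (∃ (s : ZMod N) (m : ℕ), m ≤ N ∧
        I = (Finset.range m).image (fun j : ℕ => s + (j : ZMod N))) ∧
      |(I.card : ℤ) - (Iᶜ.card : ℤ)| ≤ 2 ∧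
      |(∑ i ∈ I, (r i : ℤ)) - ∑ i ∈ Iᶜ, (r i : ℤ)| ≤ 2 * (b : ℤ) + 2 :=
  fully_balanced_cyclic_partition_general N b r hr
end

section
/- Let m ≥ 1, L, W be natural numbers, and let s, w : ZMod m → ℕ satisfy s j ≤ L and w j ≤ W for every j. Then there exists a cyclically contiguous subset J of ZMod m (i.e., J = {t, t+1, ..., t+ℓ−1} with indices taken modulo m, for some t and some 0 ≤ ℓ ≤ m) such that: (i) |∑_{j ∈ J} s j − ∑_{j ∉ J} s j| ≤ 4·L + 2, and (ii) |∑_{j ∈ J} w j − ∑_{j ∉ J} w j| ≤ 4·W + 2. -/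
/-!
Lay the blocks out as a necklace on a line: block `t` becomes `2 s t` red beads followed by
`2 w t` blue ones, so that all totals are even. Sliding a window of half the necklace's length
from the first half to the second changes its number of red beads by at most one per step and
ends at the complementary count, so some window holds exactly half of the red beads, and hence
also half of the blue ones. Pulling both ends of this window back to the starts of their blocks
changes its red and blue counts by at most `2 L` and `2 W`; the blocks between the two cuts
form a cyclically contiguous set `J` with `|∑_J s - ∑_Jᶜ s| ≤ 2 L` and `|∑_J w - ∑_Jᶜ w| ≤ 2 W`.
-/

open Finset

namespace Necklace

theorem exists_eq_of_succ_le_add_one (f : ℕ → ℤ) (hf : ∀ i, f (i + 1) ≤ f i + 1) {n : ℕ} {c : ℤ}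
    (h0 : f 0 ≤ c) (hn : c ≤ f n) : ∃ x ≤ n, f x = c := by
  induction n with
  | zero => exact ⟨0, le_rfl, le_antisymm h0 hn⟩
  | succ n ih =>
    by_cases hc : c ≤ f n
    · obtain ⟨x, hx, hfx⟩ := ih hc
      exact ⟨x, by omega, hfx⟩
    · exact ⟨n + 1, le_rfl, by have := hf n; omega⟩

/-- The window `[x, x + n)` moves from `[0, n)` to its complement `[n, 2n)`, changing its count
by at most one per step, so it passes through half the total count. -/
theorem exists_window_eq_half (R : ℕ → ℤ) (hmono : Monotone R) (hlip : ∀ x, R (x + 1) ≤ R x + 1)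
    (n : ℕ) {c : ℤ} (hc : R (n + n) - R 0 = 2 * c) : ∃ x ≤ n, R (x + n) - R x = c := by
  have hup : ∀ i, R (i + 1 + n) - R (i + 1) ≤ R (i + n) - R i + 1 := fun i => by
    have := hlip (i + n); have := hmono (Nat.le_add_right i 1); rw [Nat.add_right_comm]; omega
  have hdown : ∀ i, -(R (i + 1 + n) - R (i + 1)) ≤ -(R (i + n) - R i) + 1 := fun i => by
    have := hlip i; have := hmono (Nat.le_add_right (i + n) 1); rw [Nat.add_right_comm]; omega
  rcases le_total (R (0 + n) - R 0) c with h | h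
  · exact exists_eq_of_succ_le_add_one _ hup h (by simp only [zero_add] at h ⊢; omega)
  · obtain ⟨x, hx, hfx⟩ := exists_eq_of_succ_le_add_one _ hdown (n := n) (c := -c) (by omega)
      (by simp only [zero_add] at h ⊢; omega)
    exact ⟨x, hx, by omega⟩

section Beads

variable (a b : ℕ → ℕ) (m : ℕ)

/-- Block `t` occupies the positions `[blockStart a b t, blockStart a b (t + 1))`: first `a t` red
beads, then `b t` blue ones. `redCount a b m x` and `blueCount a b m x` count the red and blue
beads of the first `m` blocks at positions `< x`. -/
def blockStart (t : ℕ) : ℕ := ∑ i ∈ range t, (a i + b i)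

def redCount (x : ℕ) : ℕ := ∑ t ∈ range m, min (a t) (x - blockStart a b t)

def blueCount (x : ℕ) : ℕ := ∑ t ∈ range m, min (b t) (x - blockStart a b t - a t)

lemma blockStart_succ (t : ℕ) : blockStart a b (t + 1) = blockStart a b t + (a t + b t) :=
  sum_range_succ _ t

lemma blockStart_mono : Monotone (blockStart a b) := fun _ _ h =>
  sum_le_sum_of_subset (range_subset_range.2 h)

@[simp] lemma blockStart_zero : blockStart a b 0 = 0 := rfl

lemma redCount_mono : Monotone (redCount a b m) := fun _ _ h =>
  sum_le_sum fun _ _ => min_le_min le_rfl (Nat.sub_le_sub_right h _)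

lemma blueCount_mono : Monotone (blueCount a b m) := fun _ _ h =>
  sum_le_sum fun _ _ => min_le_min le_rfl (Nat.sub_le_sub_right (Nat.sub_le_sub_right h _) _)

lemma redCount_add_blueCount (x : ℕ) :
    redCount a b m x + blueCount a b m x = min (blockStart a b m) x := by
  have hmono : Monotone fun t => min (blockStart a b t) x :=
    fun _ _ h => min_le_min (blockStart_mono a b h) le_rfl
  rw [redCount, blueCount, ← sum_add_distrib]
  convert sum_range_tsub hmono m using 1
  · refine sum_congr rfl fun t _ => ?_
    have := blockStart_succ a b t
    omega
  · simp

lemma redCount_succ_le (x : ℕ) : redCount a b m (x + 1) ≤ redCount a b m x + 1 := by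
  have := redCount_add_blueCount a b m x
  have := redCount_add_blueCount a b m (x + 1)
  have := blueCount_mono a b m (Nat.le_add_right x 1)
  omega

lemma redCount_blockStart {k : ℕ} (hk : k ≤ m) :
    redCount a b m (blockStart a b k) = ∑ t ∈ range k, a t := by
  rw [redCount, ← sum_range_add_sum_Ico _ hk, sum_eq_zero (s := Ico k m), add_zero]
  · refine sum_congr rfl fun t ht => min_eq_left ?_
    have := blockStart_mono a b (show t + 1 ≤ k from mem_range.1 ht)
    have := blockStart_succ a b t
    omega
  · intro t ht
    have := blockStart_mono a b (mem_Ico.1 ht).1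
    omega

lemma blueCount_blockStart {k : ℕ} (hk : k ≤ m) :
    blueCount a b m (blockStart a b k) = ∑ t ∈ range k, b t := by
  have h := redCount_add_blueCount a b m (blockStart a b k)
  have hk' : blockStart a b k = ∑ t ∈ range k, a t + ∑ t ∈ range k, b t := sum_add_distrib
  rw [min_eq_right (blockStart_mono a b hk), redCount_blockStart a b m hk] at h
  omega

end Beads

section Rounding

variable {P : ℕ → ℕ} {m : ℕ}

def blockIndex (P : ℕ → ℕ) (m x : ℕ) : ℕ := Nat.findGreatest (fun t => P t ≤ x) m

lemma blockIndex_le (x : ℕ) : blockIndex P m x ≤ m := Nat.findGreatest_le m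

lemma blockIndex_mono : Monotone (blockIndex P m) := fun _ _ h =>
  Nat.findGreatest_mono_left (fun _ ht => ht.trans h) m

lemma start_blockIndex_le (hP0 : P 0 = 0) (x : ℕ) : P (blockIndex P m x) ≤ x :=
  Nat.findGreatest_spec (P := fun t => P t ≤ x) (Nat.zero_le m) (by simp [hP0])

lemma lt_start_blockIndex_succ {x : ℕ} (h : blockIndex P m x < m) :
    x < P (blockIndex P m x + 1) :=
  not_le.1 (Nat.findGreatest_is_greatest (P := fun t => P t ≤ x) (Nat.lt_succ_self _) h)

/-- Moving both ends of a window `[x, y)` back to the starts of their blocks changes its count by at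
most one block's contribution. -/
theorem abs_sum_Ico_blockIndex_sub_le (hP0 : P 0 = 0) (F : ℕ → ℕ)
    (hF : Monotone F) (c : ℕ → ℕ) (hFc : ∀ k ≤ m, F (P k) = ∑ t ∈ range k, c t) {C : ℕ}
    (hc : ∀ t, c t ≤ C) {x y : ℕ} (hxy : x ≤ y) (hy : y ≤ P m) :
    |(∑ t ∈ Ico (blockIndex P m x) (blockIndex P m y), (c t : ℤ)) - (F y - F x)| ≤ C := by
  have hround : ∀ z ≤ P m, F (P (blockIndex P m z)) ≤ F z ∧
      F z ≤ F (P (blockIndex P m z)) + C := by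
    intro z hz
    refine ⟨hF (start_blockIndex_le hP0 z), ?_⟩
    rcases (blockIndex_le (P := P) (m := m) z).lt_or_eq with h | h
    · calc F z ≤ F (P (blockIndex P m z + 1)) := hF (lt_start_blockIndex_succ h).le
        _ = F (P (blockIndex P m z)) + c (blockIndex P m z) := by
          rw [hFc _ h, hFc _ h.le, sum_range_succ]
        _ ≤ _ := by have := hc (blockIndex P m z); omega
    · exact (hF (hz.trans_eq (congrArg P h.symm))).trans (Nat.le_add_right _ _)
  have hIco := sum_range_add_sum_Ico c (blockIndex_mono (P := P) (m := m) hxy)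
  rw [← hFc _ (blockIndex_le x), ← hFc _ (blockIndex_le y)] at hIco
  obtain ⟨hx₁, hx₂⟩ := hround x (hxy.trans hy)
  obtain ⟨hy₁, hy₂⟩ := hround y hy
  rw [← Nat.cast_sum, abs_le]
  constructor <;> omega

end Rounding

theorem exists_Ico_sum_near_half (a b : ℕ → ℕ) (m : ℕ) {A B S T : ℕ} (ha : ∀ t, a t ≤ A)
    (hb : ∀ t, b t ≤ B) (hS : ∑ t ∈ range m, a t = 2 * S) (hT : ∑ t ∈ range m, b t = 2 * T) :
    ∃ j k, j ≤ k ∧ k ≤ m ∧ |(∑ t ∈ Ico j k, (a t : ℤ)) - S| ≤ A ∧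
      |(∑ t ∈ Ico j k, (b t : ℤ)) - T| ≤ B := by
  set n := S + T
  have hPm : blockStart a b m = n + n := by rw [blockStart, sum_add_distrib, hS, hT]; ring
  have hred0 : redCount a b m 0 = 0 := by simpa using redCount_blockStart a b m (Nat.zero_le m)
  obtain ⟨x, hxn, hred⟩ := exists_window_eq_half (fun x => (redCount a b m x : ℤ))
    (fun _ _ h => Nat.cast_le.2 (redCount_mono a b m h))
    (fun x => by exact_mod_cast redCount_succ_le a b m x) n (c := S)
    (by rw [← hPm, redCount_blockStart a b m le_rfl, hS, hred0]; push_cast; ring)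
  have hblue : (blueCount a b m (x + n) : ℤ) - blueCount a b m x = T := by
    have := redCount_add_blueCount a b m x
    have := redCount_add_blueCount a b m (x + n)
    omega
  refine ⟨blockIndex (blockStart a b) m x, blockIndex (blockStart a b) m (x + n),
    blockIndex_mono (Nat.le_add_right x n), blockIndex_le (x + n), ?_, ?_⟩
  · have := abs_sum_Ico_blockIndex_sub_le rfl (redCount a b m) (redCount_mono a b m) a
      (fun k hk => redCount_blockStart a b m hk) ha (Nat.le_add_right x n) (by omega)
    rwa [show ((redCount a b m (x + n) : ℤ) - redCount a b m x) = S from hred] at this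
  · have := abs_sum_Ico_blockIndex_sub_le rfl (blueCount a b m) (blueCount_mono a b m) b
      (fun k hk => blueCount_blockStart a b m hk) hb (Nat.le_add_right x n) (by omega)
    rwa [hblue] at this

theorem exists_Ico_abs_two_mul_sum_sub_le (a b : ℕ → ℕ) (m : ℕ) {A B : ℕ} (ha : ∀ t, a t ≤ A)
    (hb : ∀ t, b t ≤ B) :
    ∃ j k, j ≤ k ∧ k ≤ m ∧
      |2 * ∑ t ∈ Ico j k, (a t : ℤ) - ∑ t ∈ range m, (a t : ℤ)| ≤ 2 * A ∧
      |2 * ∑ t ∈ Ico j k, (b t : ℤ) - ∑ t ∈ range m, (b t : ℤ)| ≤ 2 * B := by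
  obtain ⟨j, k, hjk, hkm, ha', hb'⟩ := exists_Ico_sum_near_half (fun t => 2 * a t)
    (fun t => 2 * b t) m (A := 2 * A) (B := 2 * B) (fun t => by simp [ha t])
    (fun t => by simp [hb t]) (mul_sum _ _ _).symm (mul_sum _ _ _).symm
  refine ⟨j, k, hjk, hkm, ?_, ?_⟩
  · simpa only [Nat.cast_mul, Nat.cast_ofNat, Nat.cast_sum, ← mul_sum] using ha'
  · simpa only [Nat.cast_mul, Nat.cast_ofNat, Nat.cast_sum, ← mul_sum] using hb'

end Necklace

namespace ZMod

lemma natCast_injOn_range (m : ℕ) : Set.InjOn (Nat.cast : ℕ → ZMod m) (range m) :=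
  fun i hi j hj h => ((natCast_eq_natCast_iff i j m).1 h).eq_of_lt_of_lt (mem_range.1 hi)
    (mem_range.1 hj)

lemma sum_image_range_add {M : Type*} [AddCommMonoid M] {m ℓ : ℕ} (hℓ : ℓ ≤ m) (t : ZMod m)
    (F : ZMod m → M) :
    ∑ x ∈ (range ℓ).image (fun i : ℕ => t + i), F x = ∑ i ∈ range ℓ, F (t + i) :=
  sum_image fun _ hi _ hj h => natCast_injOn_range m (range_subset_range.2 hℓ hi)
    (range_subset_range.2 hℓ hj) (add_left_cancel h)

lemma sum_univ_eq_sum_range {M : Type*} [AddCommMonoid M] {m : ℕ} [NeZero m] (F : ZMod m → M) :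
    ∑ x, F x = ∑ i ∈ range m, F i := by
  have huniv : (range m).image (Nat.cast : ℕ → ZMod m) = univ := eq_univ_of_card _ <| by
    rw [card_image_of_injOn (natCast_injOn_range m), card_range, ZMod.card]
  rw [← huniv, sum_image (natCast_injOn_range m)]

lemma sum_image_range_sub_sum_compl {m : ℕ} [NeZero m] (F : ZMod m → ℤ) {j k : ℕ} (hkm : k ≤ m) :
    let J := (range (k - j)).image (fun i : ℕ => (j : ZMod m) + i)
    ∑ x ∈ J, F x - ∑ x ∈ Jᶜ, F x = 2 * ∑ t ∈ Ico j k, F t - ∑ t ∈ range m, F t := by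
  intro J
  rw [← sum_univ_eq_sum_range, ← sum_add_sum_compl J, sum_image_range_add (by omega),
    sum_Ico_eq_sum_range]
  push_cast
  ring

end ZMod

theorem relax_balanced_cyclic_partition_general (m L W : ℕ) [NeZero m]
    (s w : ZMod m → ℕ) (hs : ∀ j, s j ≤ L) (hw : ∀ j, w j ≤ W) :
    ∃ J : Finset (ZMod m),
      (∃ (t : ZMod m) (ℓ : ℕ), ℓ ≤ m ∧
        J = (Finset.range ℓ).image (fun j : ℕ => t + (j : ZMod m))) ∧
      |(∑ j ∈ J, (s j : ℤ)) - ∑ j ∈ Jᶜ, (s j : ℤ)| ≤ 4 * (L : ℤ) + 2 ∧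
      |(∑ j ∈ J, (w j : ℤ)) - ∑ j ∈ Jᶜ, (w j : ℤ)| ≤ 4 * (W : ℤ) + 2 := by
  obtain ⟨j, k, -, hkm, hs', hw'⟩ :=
    Necklace.exists_Ico_abs_two_mul_sum_sub_le (fun t => s t) (fun t => w t) m
      (fun t => hs t) (fun t => hw t)
  refine ⟨_, ⟨j, k - j, by omega, rfl⟩, ?_, ?_⟩
  · rw [ZMod.sum_image_range_sub_sum_compl (fun x => (s x : ℤ)) hkm]
    exact hs'.trans (by omega)
  · rw [ZMod.sum_image_range_sub_sum_compl (fun x => (w x : ℤ)) hkm]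
    exact hw'.trans (by omega)

/-- Combinatorial core of the relax-balanced partition: blocks of bounded
size and bounded weight admit a cyclically contiguous two-piece partition
that nearly balances both total size and total weight. -/
theorem relax_balanced_cyclic_partition (m L W : ℕ) [NeZero m] (hm : 1 ≤ m)
    (s w : ZMod m → ℕ) (hs : ∀ j, s j ≤ L) (hw : ∀ j, w j ≤ W) :
    ∃ J : Finset (ZMod m),
      (∃ (t : ZMod m) (ℓ : ℕ), ℓ ≤ m ∧
        J = (Finset.range ℓ).image (fun j : ℕ => t + (j : ZMod m))) ∧
      |(∑ j ∈ J, (s j : ℤ)) - ∑ j ∈ Jᶜ, (s j : ℤ)| ≤ 4 * (L : ℤ) + 2 ∧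
      |(∑ j ∈ J, (w j : ℤ)) - ∑ j ∈ Jᶜ, (w j : ℤ)| ≤ 4 * (W : ℤ) + 2 :=
  relax_balanced_cyclic_partition_general m L W s w hs hw
end
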